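/- Let S be an S-tree with |ISupp(S)| ≠ ∅, where ISupp(S) is the set of supported vertices of degree greater than 1. Then S is an S-coalescence of S-trees: for any v ∈ ISupp(S) with neighbors u_1,...,u_k, the trees S(v_i*) obtained by splitting v into k copies v_1*,...,v_k* (with v_i* adjacent only to u_i) are all S-trees, and S = ⊛_{i=1}^k (S(v_i*), v_i*). -/

import Mathlib

open scoped Classical

open SimpleGraph Matrix

noncomputable section

variable {V : Type*}

/-- The real adjacency matrix of a simple graph. -/
def adjMat [Fintype V] (G : SimpleGraph V) : Matrix V V ℝ :=
  Matrix.of fun a b => if G.Adj a b then (1 : ℝ) else 0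

/-- Support of the null space of the adjacency matrix. -/
def suppSet [Fintype V] (G : SimpleGraph V) : Set V :=
  {v | ∃ x : V → ℝ, adjMat G *ᵥ x = 0 ∧ x v ≠ 0}

/-- Core: the set of neighbors of supported vertices. -/
def coreSet [Fintype V] (G : SimpleGraph V) : Set V :=
  {v | ∃ u ∈ suppSet G, G.Adj u v}

/-- An S-tree: a tree in which the closed neighborhood of the support is everything. -/
def IsSTree [Fintype V] (G : SimpleGraph V) : Prop :=
  G.IsTree ∧ suppSet G ∪ coreSet G = Set.univ

/-- Nullity of a graph: dimension of the kernel of its adjacency matrix. -/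
def nullity [Fintype V] (G : SimpleGraph V) : ℕ :=
  Module.finrank ℝ (LinearMap.ker (adjMat G).mulVecLin)

/-- Rank of a graph: rank of its adjacency matrix. -/
def rankA [Fintype V] (G : SimpleGraph V) : ℕ :=
  (adjMat G).rank

/-- Matching number: the maximum cardinality of a matching. -/
def matchingNumber [Fintype V] (G : SimpleGraph V) : ℕ :=
  sSup {n | ∃ M : G.Subgraph, M.IsMatching ∧ M.edgeSet.ncard = n}

/-- The set of maximum matchings. -/
def maxMatchings [Fintype V] (G : SimpleGraph V) : Set G.Subgraph :=
  {M | M.IsMatching ∧ M.edgeSet.ncard = matchingNumber G}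

/-- The number of maximum matchings. -/
def numMaxMatchings [Fintype V] (G : SimpleGraph V) : ℕ :=
  (maxMatchings G).ncard

/-- Independence number. -/
def indepNumber [Fintype V] (G : SimpleGraph V) : ℕ :=
  sSup {n | ∃ s : Set V, (∀ a ∈ s, ∀ b ∈ s, ¬ G.Adj a b) ∧ s.ncard = n}

/-- `G` is the S-coalescence `⊛ᵢ (S i, v i)`: the vertices `v i` are identified into the single
vertex `vstar`, via the embeddings `g i : V i → W`. -/
structure IsSCoalescence {ι : Type*} {Vf : ι → Type*} [∀ i, Fintype (Vf i)]
    {W : Type*} [Fintype W]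
    (S : ∀ i, SimpleGraph (Vf i)) (v : ∀ i, Vf i)
    (G : SimpleGraph W) (g : ∀ i, Vf i → W) (vstar : W) : Prop where
  map_v : ∀ i, g i (v i) = vstar
  inj : ∀ i, Function.Injective (g i)
  disj : ∀ i j a b, i ≠ j → a ≠ v i → b ≠ v j → g i a ≠ g j b
  cover : ∀ w : W, ∃ i a, g i a = w
  adj_within : ∀ i a b, G.Adj (g i a) (g i b) ↔ (S i).Adj a b
  not_adj_across : ∀ i j a b, i ≠ j → a ≠ v i → b ≠ v j → ¬ G.Adj (g i a) (g j b)

lemma adj_row [Fintype V] (G : SimpleGraph V) (x : V → ℝ) (a : V) :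
    (adjMat G *ᵥ x) a = ∑ b, if G.Adj a b then x b else 0 := by
  simp [adjMat, mulVec, dotProduct, ite_mul]

lemma sum_subtype_full {α : Type*} [Fintype α] (p : α → Prop) [Fintype {x // p x}] (f : α → ℝ)
    (h0 : ∀ a, ¬ p a → f a = 0) : ∑ a : {x // p x}, f a.1 = ∑ a, f a := by
  rw [← Finset.sum_filter_of_ne (p := p) (fun a _ ha => by by_contra h; exact ha (h0 a h))]
  exact (Finset.sum_subtype (Finset.univ.filter p) (by simp) f).symm

lemma exists_leaf [Fintype V] {G : SimpleGraph V} (hac : G.IsAcyclic) {a₀ b₀ : V}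
    (h₀ : G.Adj a₀ b₀) : ∃ ℓ p, G.Adj ℓ p ∧ ∀ t, G.Adj ℓ t → t = p := by
  classical
  set L : Set ℕ := {n | ∃ (a b : V) (w : G.Walk a b), w.IsPath ∧ w.length = n} with hL
  have hne : L.Nonempty := ⟨1, a₀, b₀, Walk.cons h₀ Walk.nil, by
    simp [Walk.cons_isPath_iff, h₀.ne], by simp⟩
  have hbdd : BddAbove L := by
    refine ⟨Fintype.card V, ?_⟩
    rintro n ⟨a, b, w, hw, rfl⟩
    exact le_of_lt hw.length_lt
  obtain ⟨a, b, w, hw, hlen⟩ := Nat.sSup_mem hne hbdd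
  have h1 : 1 ≤ sSup L := le_csSup hbdd hne.choose_spec |> fun _ => le_csSup hbdd (by
    exact ⟨a₀, b₀, Walk.cons h₀ Walk.nil, by simp [Walk.cons_isPath_iff, h₀.ne], by simp⟩)
  -- work with the reverse walk
  have hwr : w.reverse.IsPath := hw.reverse
  have hlenr : w.reverse.length = sSup L := by simp [hlen]
  rcases hr : w.reverse with _ | @⟨_, c, _, h, q⟩
  · exfalso; rw [hr] at hlenr; simp at hlenr; omega
  · rw [hr] at hwr hlenr
    refine ⟨b, c, h, ?_⟩
    intro t ht
    by_contra htc
    rcases Classical.em (t ∈ (Walk.cons h q).support) with hmem | hmem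
    · -- t on the path: two distinct paths from b to t
      have hP1 : ((Walk.cons h q).takeUntil t hmem).IsPath := hwr.takeUntil hmem
      have hP2 : (Walk.cons ht Walk.nil : G.Walk b t).IsPath := by
        simp [Walk.cons_isPath_iff, ht.ne]
      have := hac.path_unique ⟨_, hP1⟩ ⟨_, hP2⟩
      have heq : (Walk.cons h q).takeUntil t hmem = Walk.cons ht Walk.nil :=
        congrArg Subtype.val this
      have hedge : s(b, t) ∈ ((Walk.cons h q).takeUntil t hmem).edges := by
        rw [heq]; simp
      have hedge2 : s(b, t) ∈ (Walk.cons h q).edges :=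
        (Walk.edges_takeUntil_subset _ hmem) hedge
      rw [Walk.edges_cons] at hedge2
      rcases List.mem_cons.mp hedge2 with he | he
      · have : t = c := by
          have := Sym2.eq_iff.mp he
          rcases this with ⟨h1', h2'⟩ | ⟨h1', h2'⟩
          · exact h2'
          · exact h2'.trans h1'
        exact htc this
      · have : b ∈ q.support := Walk.fst_mem_support_of_mem_edges q he
        have hnodup := hwr.support_nodup
        rw [Walk.support_cons] at hnodup
        exact (List.nodup_cons.mp hnodup).1 this
    · -- extend the path
      have hext : (Walk.cons ht.symm (Walk.cons h q)).IsPath :=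
        (Walk.cons_isPath_iff _ _).mpr ⟨hwr, hmem⟩
      have : (Walk.cons ht.symm (Walk.cons h q)).length ∈ L :=
        ⟨t, a, _, hext, rfl⟩
      have hle := le_csSup hbdd this
      rw [Walk.length_cons, hlenr] at hle
      omega


lemma leaf_kernel_zero [Fintype V] {G : SimpleGraph V} {ℓ p : V} (hadj : G.Adj ℓ p)
    (hleaf : ∀ t, G.Adj ℓ t → t = p) {x : V → ℝ} (hx : adjMat G *ᵥ x = 0) : x p = 0 := by
  have h := congrFun hx ℓ
  rw [adj_row] at h
  rw [Finset.sum_eq_single p (fun b _ hb => if_neg (fun ha => hb (hleaf b ha)))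
    (fun h => absurd (Finset.mem_univ p) h)] at h
  rwa [if_pos hadj] at h

lemma supp_indep_aux : ∀ (n : ℕ) {V : Type u} [Fintype V] (G : SimpleGraph V),
    Fintype.card V ≤ n → G.IsAcyclic →
    ∀ (x y : V → ℝ) (a b : V), adjMat G *ᵥ x = 0 → adjMat G *ᵥ y = 0 → G.Adj a b →
    x a = 0 ∨ y b = 0 := by
  intro n
  induction n with
  | zero =>
    intro V _ G hcard _ x y a b _ _ _
    have : 0 < Fintype.card V := Fintype.card_pos_iff.mpr ⟨a⟩
    omega
  | succ n ih =>
    intro V _ G hcard hac x y a b hx hy hab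
    by_contra hcon
    push_neg at hcon
    obtain ⟨hxa, hyb⟩ := hcon
    obtain ⟨ℓ, p, hlp, hleaf⟩ := exists_leaf hac hab
    have hxp : x p = 0 := leaf_kernel_zero hlp hleaf hx
    have hyp : y p = 0 := leaf_kernel_zero hlp hleaf hy
    have hap : a ≠ p := fun h => hxa (h ▸ hxp)
    have hbp : b ≠ p := fun h => hyb (h ▸ hyp)
    have hal : a ≠ ℓ := fun h => hbp (hleaf b (h ▸ hab))
    have hbl : b ≠ ℓ := fun h => hap (hleaf a (h ▸ hab.symm))
    let G' : SimpleGraph {w : V // w ≠ ℓ ∧ w ≠ p} := G.comap Subtype.val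
    have hac' : G'.IsAcyclic := by
      intro v c hc
      exact hac _ (hc.map (f := (⟨Subtype.val, fun h => h⟩ : G' →g G)) Subtype.val_injective)
    have hcard' : Fintype.card {w : V // w ≠ ℓ ∧ w ≠ p} ≤ n := by
      have : Fintype.card {w : V // w ≠ ℓ ∧ w ≠ p} < Fintype.card V :=
        Fintype.card_lt_of_injective_of_notMem Subtype.val Subtype.val_injective
          (b := ℓ) (by rintro ⟨⟨w, hw1, hw2⟩, h⟩; exact hw1 h)
      omega
    -- restricted kernel vectors
    have hker : ∀ (z : V → ℝ), adjMat G *ᵥ z = 0 → z p = 0 →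
        adjMat G' *ᵥ (fun w : {w : V // w ≠ ℓ ∧ w ≠ p} => z w.1) = 0 := by
      intro z hz hzp
      funext c
      rw [adj_row]
      have : ∀ (d : {w : V // w ≠ ℓ ∧ w ≠ p}), (if G'.Adj c d then z d.1 else 0) =
          (fun t => if G.Adj c.1 t then z t else 0) d.1 := fun d => rfl
      refine (Finset.sum_congr rfl (fun d _ => this d)).trans ?_
      rw [sum_subtype_full (fun w => w ≠ ℓ ∧ w ≠ p) (fun t => if G.Adj c.1 t then z t else 0)]
      · rw [← adj_row, hz]; rfl
      · intro t ht
        rcases Classical.em (t = ℓ) with rfl | htl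
        · refine if_neg (fun hadj => ?_)
          exact c.2.2 (hleaf c.1 hadj.symm)
        · have : t = p := by
            rcases Classical.em (t = p) with rfl | htp
            · rfl
            · exact absurd ⟨htl, htp⟩ ht
          subst this
          simp [hzp]
    have := ih G' hcard' hac' _ _ ⟨a, hal, hap⟩ ⟨b, hbl, hbp⟩
      (hker x hx hxp) (hker y hy hyp) hab
    simp only at this
    rcases this with h | h
    · exact hxa h
    · exact hyb h


/-- The vertex set of a piece. -/
def CSet (S : SimpleGraph V) (v u : V) : Set V :=
  {x | x ≠ v ∧ ∃ p : S.Walk u x, v ∉ p.support}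

/-- The piece graph. -/
def piece [Fintype V] (S : SimpleGraph V) (v u : V) : SimpleGraph ↥(CSet S v u ∪ {v}) :=
  (SimpleGraph.fromRel
    (fun a b => (S.Adj a b ∧ a ≠ v ∧ b ≠ v) ∨ (a = v ∧ b = u))).induce (CSet S v u ∪ {v})

section CFacts
variable {S : SimpleGraph V} {v u : V}

lemma cset_self (huv : S.Adj v u) : u ∈ CSet S v u :=
  ⟨huv.ne', Walk.nil, by simp [huv.ne]⟩

lemma cset_closed {z t : V} (hz : z ∈ CSet S v u) (hzt : S.Adj z t) (htv : t ≠ v) :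
    t ∈ CSet S v u := by
  obtain ⟨hzv, w, hw⟩ := hz
  refine ⟨htv, w.concat hzt, ?_⟩
  rw [Walk.support_concat]
  simp only [List.concat_eq_append, List.mem_append, List.mem_singleton]
  rintro (h | h)
  · exact hw h
  · exact htv h.symm

lemma cset_adj_v (hT : S.IsTree) (huv : S.Adj v u) {z : V} (hz : z ∈ CSet S v u)
    (hvz : S.Adj v z) : z = u := by
  by_contra hzu
  obtain ⟨hzv, w, hw⟩ := hz
  have hP1 : (Walk.cons huv (w.toPath : S.Walk u z)).IsPath :=
    (Walk.cons_isPath_iff _ _).mpr ⟨(w.toPath).2, fun h => hw (Walk.support_toPath_subset w h)⟩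
  have hP2 : (Walk.cons hvz Walk.nil : S.Walk v z).IsPath := by
    simp [Walk.cons_isPath_iff, hvz.ne]
  obtain ⟨P, -, hun⟩ := hT.existsUnique_path v z
  have heq : Walk.cons huv (w.toPath : S.Walk u z) = Walk.cons hvz Walk.nil :=
    (hun _ hP1).trans (hun _ hP2).symm
  have := congrArg Walk.support heq
  rw [Walk.support_cons, Walk.support_cons, Walk.support_nil,
    Walk.support_eq_cons (w.toPath : S.Walk u z)] at this
  have h2 := (List.cons_eq_cons.mp this).2
  exact hzu ((List.cons_eq_cons.mp h2).1).symm

lemma cset_disjoint (hT : S.IsTree) {u₁ u₂ : V} (h1 : S.Adj v u₁) (h2 : S.Adj v u₂)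
    (hne : u₁ ≠ u₂) {z : V} (hz1 : z ∈ CSet S v u₁) (hz2 : z ∈ CSet S v u₂) : False := by
  obtain ⟨hzv, w₁, hw₁⟩ := hz1
  obtain ⟨-, w₂, hw₂⟩ := hz2
  have hP1 : (Walk.cons h1 (w₁.toPath : S.Walk u₁ z)).IsPath :=
    (Walk.cons_isPath_iff _ _).mpr ⟨(w₁.toPath).2, fun h => hw₁ (Walk.support_toPath_subset w₁ h)⟩
  have hP2 : (Walk.cons h2 (w₂.toPath : S.Walk u₂ z)).IsPath :=
    (Walk.cons_isPath_iff _ _).mpr ⟨(w₂.toPath).2, fun h => hw₂ (Walk.support_toPath_subset w₂ h)⟩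
  obtain ⟨P, -, hun⟩ := hT.existsUnique_path v z
  have heq : Walk.cons h1 (w₁.toPath : S.Walk u₁ z) = Walk.cons h2 (w₂.toPath : S.Walk u₂ z) :=
    (hun _ hP1).trans (hun _ hP2).symm
  have := congrArg Walk.support heq
  rw [Walk.support_cons, Walk.support_cons, Walk.support_eq_cons (w₁.toPath : S.Walk u₁ z),
    Walk.support_eq_cons (w₂.toPath : S.Walk u₂ z)] at this
  exact hne ((List.cons_eq_cons.mp (List.cons_eq_cons.mp this).2).1)

lemma cset_cover (hT : S.IsTree) {w : V} (hw : w ≠ v) :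
    ∃ u, S.Adj v u ∧ w ∈ CSet S v u := by
  obtain ⟨W⟩ := hT.isConnected.preconnected v w
  obtain ⟨c, h, q, hq⟩ := Walk.exists_eq_cons_of_ne (Ne.symm hw) (W.toPath : S.Walk v w)
  have hpath := (W.toPath).2
  rw [hq, Walk.cons_isPath_iff] at hpath
  exact ⟨c, h, hw, q, hpath.2⟩

end CFacts

section Piece
variable [Fintype V] {S : SimpleGraph V} {v u : V}

lemma piece_adj (hT : S.IsTree) (huv : S.Adj v u) (a b : ↥(CSet S v u ∪ {v})) :
    (piece S v u).Adj a b ↔ S.Adj a.1 b.1 := by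
  show (SimpleGraph.fromRel
    (fun a b => (S.Adj a b ∧ a ≠ v ∧ b ≠ v) ∨ (a = v ∧ b = u))).Adj a.1 b.1 ↔ _
  rw [SimpleGraph.fromRel_adj]
  constructor
  · rintro ⟨hne, (⟨h, -, -⟩ | ⟨h1, h2⟩) | (⟨h, -, -⟩ | ⟨h1, h2⟩)⟩
    · exact h
    · rw [h1, h2]; exact huv
    · exact h.symm
    · rw [h1, h2]; exact huv.symm
  · intro hadj
    refine ⟨hadj.ne, ?_⟩
    rcases Classical.em (a.1 = v) with ha | ha
    · rcases b.2 with hb | hb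
      · exact Or.inl (Or.inr ⟨ha, cset_adj_v hT huv hb (by rw [ha] at hadj; exact hadj)⟩)
      · exact absurd (ha.trans hb.symm) hadj.ne
    · rcases Classical.em (b.1 = v) with hb | hb
      · have ha' : a.1 ∈ CSet S v u := a.2.resolve_right ha
        exact Or.inr (Or.inr ⟨hb, cset_adj_v hT huv ha' (by rw [hb] at hadj; exact hadj.symm)⟩)
      · exact Or.inl (Or.inl ⟨hadj, ha, hb⟩)

lemma piece_kernel [instP : Fintype ↥(CSet S v u ∪ {v})] (hT : S.IsTree) (hsupp : v ∈ suppSet S) (huv : S.Adj v u)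
    {y : V → ℝ} (hy : adjMat S *ᵥ y = 0) :
    adjMat (piece S v u) *ᵥ (fun b => y b.1) = 0 := by
  obtain ⟨x, hx, hxv⟩ := hsupp
  have hyu : y u = 0 := by
    rcases supp_indep_aux (Fintype.card V) S le_rfl hT.IsAcyclic x y v u hx hy huv with h | h
    · exact absurd h hxv
    · exact h
  funext a
  rw [adj_row]
  have hsum : ∀ b : ↥(CSet S v u ∪ {v}),
      (if (piece S v u).Adj a b then y b.1 else 0) = (if S.Adj a.1 b.1 then y b.1 else 0) :=
    fun b => if_congr (piece_adj hT huv a b) rfl rfl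
  rw [Finset.sum_congr rfl (fun b _ => hsum b)]
  rcases Classical.em (a.1 = v) with ha | ha
  · rw [Finset.sum_eq_single (⟨u, Or.inl (cset_self huv)⟩ : ↥(CSet S v u ∪ {v}))]
    · rw [if_pos (show S.Adj a.1 u by rw [ha]; exact huv), hyu]; rfl
    · intro b _ hb
      refine if_neg (fun hadj => hb ?_)
      rw [ha] at hadj
      have hbv : b.1 ≠ v := hadj.ne'
      have : b.1 = u := cset_adj_v hT huv (b.2.resolve_right hbv) hadj
      exact Subtype.ext this
    · intro h; exact absurd (Finset.mem_univ _) h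
  · have ha' : a.1 ∈ CSet S v u := a.2.resolve_right ha
    have h0 : ∀ t, ¬ t ∈ (CSet S v u ∪ {v} : Set V) → (if S.Adj a.1 t then y t else 0) = 0 := by
      intro t ht
      refine if_neg (fun hadj => ht ?_)
      rcases Classical.em (t = v) with rfl | htv
      · exact Or.inr rfl
      · exact Or.inl (cset_closed ha' hadj htv)
    have := sum_subtype_full (fun t => t ∈ (CSet S v u ∪ {v} : Set V))
      (fun t => if S.Adj a.1 t then y t else 0) h0
    refine this.trans ?_
    rw [← adj_row, hy]
    rfl

lemma walk_reach (hT : S.IsTree) (huv : S.Adj v u) :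
    ∀ {a z : V} (w : S.Walk a z), v ∉ w.support →
    ∀ (ha : a ∈ CSet S v u) (hz : z ∈ CSet S v u),
    (piece S v u).Reachable ⟨a, Or.inl ha⟩ ⟨z, Or.inl hz⟩ := by
  intro a z w
  induction w with
  | nil =>
    intro _ ha hz
    exact Reachable.refl _
  | @cons a t z h q ih =>
    intro hs ha hz
    rw [Walk.support_cons] at hs
    have hvq : v ∉ q.support := fun hm => hs (List.mem_cons_of_mem _ hm)
    have htv : t ≠ v := fun he => hvq (he ▸ q.start_mem_support)
    have ht : t ∈ CSet S v u := cset_closed ha h htv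
    exact ((piece_adj hT huv _ _).mpr h).reachable.trans (ih hvq ht hz)

lemma piece_connected (hT : S.IsTree) (huv : S.Adj v u) : (piece S v u).Connected := by
  have hpre : ∀ b : ↥(CSet S v u ∪ {v}),
      (piece S v u).Reachable ⟨u, Or.inl (cset_self huv)⟩ b := by
    rintro ⟨z, hz | hz⟩
    · have hz' := hz
      obtain ⟨hzv, w, hw⟩ := hz'
      exact walk_reach hT huv w hw (cset_self huv) hz
    · have hz' : z = v := hz
      subst hz'
      exact ((piece_adj hT huv _ ⟨z, Or.inr rfl⟩).mpr huv.symm).reachable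
  haveI : Nonempty ↥(CSet S v u ∪ {v}) := ⟨⟨v, Or.inr rfl⟩⟩
  exact ⟨fun a b => (hpre a).symm.trans (hpre b)⟩

lemma piece_acyclic (hT : S.IsTree) (huv : S.Adj v u) : (piece S v u).IsAcyclic := by
  intro a c hc
  exact hT.IsAcyclic
    (c.map ⟨Subtype.val, fun h => (piece_adj hT huv _ _).mp h⟩)
    (hc.map Subtype.val_injective)

lemma isSTree_congr {W : Type*} {i1 i2 : Fintype W} {G : SimpleGraph W}
    (h : @IsSTree W i1 G) : @IsSTree W i2 G := by
  rwa [Subsingleton.elim i2 i1]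

lemma piece_stree [instP : Fintype ↥(CSet S v u ∪ {v})] (hS : IsSTree S) (hv : v ∈ suppSet S) (huv : S.Adj v u) :
    IsSTree (piece S v u) := by
  have hT := hS.1
  have hvsupp : (⟨v, Or.inr rfl⟩ : ↥(CSet S v u ∪ {v})) ∈ suppSet (piece S v u) := by
    obtain ⟨x, hx, hxv⟩ := id hv
    exact ⟨fun b => x b.1, piece_kernel hT hv huv hx, hxv⟩
  refine ⟨⟨piece_connected hT huv, piece_acyclic hT huv⟩, ?_⟩
  ext b
  simp only [Set.mem_univ, iff_true]
  obtain ⟨z, hz⟩ := b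
  rcases Classical.em (z = v) with hzeq | hzv
  · obtain ⟨x, hx, hxv⟩ := id hv
    exact Or.inl ⟨fun b => x b.1, piece_kernel hT hv huv hx, by simpa [hzeq] using hxv⟩
  · have hz' : z ∈ CSet S v u := hz.resolve_right hzv
    have hzu : z ∈ suppSet S ∪ coreSet S := hS.2 ▸ Set.mem_univ z
    rcases hzu with hzs | hzc
    · obtain ⟨y, hy, hyz⟩ := hzs
      exact Or.inl ⟨fun b => y b.1, piece_kernel hT hv huv hy, hyz⟩
    · obtain ⟨s, hs, hsz⟩ := hzc
      rcases Classical.em (s = v) with rfl | hsv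
      · have hzu' : z = u := cset_adj_v hT huv hz' hsz
        refine Or.inr ⟨⟨s, Or.inr rfl⟩, hvsupp, ?_⟩
        exact (piece_adj hT huv _ _).mpr hsz
      · have hs' : s ∈ CSet S v u := cset_closed hz' hsz.symm hsv
        obtain ⟨y, hy, hys⟩ := hs
        refine Or.inr ⟨⟨s, Or.inl hs'⟩, ⟨fun b => y b.1, piece_kernel hT hv huv hy, hys⟩, ?_⟩
        exact (piece_adj hT huv _ _).mpr hsz

end Piece


set_option maxHeartbeats 2000000 in
/-- If `S` is an S-tree and `v` is a supported vertex of degree `> 1`, then `S` is an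
S-coalescence of S-trees: splitting `v` at its neighbors, each piece `S(v_u^*)` (the component
of the neighbor `u` after removing `v`, together with a copy of `v` attached only to `u`) is an
S-tree, and `S` is the S-coalescence of these pieces at the copies of `v`. -/
theorem stmt13 [Fintype V] (S : SimpleGraph V) (hS : IsSTree S)
    (v : V) (hv : v ∈ suppSet S) (hdeg : 1 < (S.neighborSet v).ncard) :
    -- the vertex set of the piece associated to a neighbor `u`: vertices reachable from `u`
    -- avoiding `v`, together with `v` itself
    let C : V → Set V := fun u => {x | x ≠ v ∧ ∃ p : S.Walk u x, v ∉ p.support}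
    -- the piece `S(v_u^*)`: the component of `u`, with `v` re-attached only to `u`
    let Tu : (u : ↥(S.neighborSet v)) → SimpleGraph ↥(C u.val ∪ {v}) := fun u =>
      (SimpleGraph.fromRel
        (fun a b => (S.Adj a b ∧ a ≠ v ∧ b ≠ v) ∨ (a = v ∧ b = u.val))).induce
        (C u.val ∪ {v})
    (∀ u : ↥(S.neighborSet v), IsSTree (Tu u)) ∧
      IsSCoalescence Tu (fun u => (⟨v, Or.inr rfl⟩ : ↥(C u.val ∪ {v})))
        S (fun u x => x.val) v := by
  intro C Tu
  have hT := hS.1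
  have hdisj : ∀ (i j : ↥(S.neighborSet v)), i ≠ j → ∀ {z : V},
      z ∈ CSet S v i.1 → z ∈ CSet S v j.1 → False := by
    intro i j hij z h1 h2
    exact cset_disjoint hT i.2 j.2 (fun h => hij (Subtype.ext h)) h1 h2
  constructor
  · intro u
    exact isSTree_congr (@piece_stree V _ S v u.1 _ hS hv u.2)
  · refine ⟨fun i => rfl, fun i => Subtype.val_injective, ?_, ?_, ?_, ?_⟩
    · intro i j a b hij hav hbv hab
      have ha : a.1 ∈ CSet S v i.1 := a.2.resolve_right (fun h => hav (Subtype.ext h))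
      have hb : b.1 ∈ CSet S v j.1 := b.2.resolve_right (fun h => hbv (Subtype.ext h))
      exact hdisj i j hij ha (by rw [(hab : a.1 = b.1)]; exact hb)
    · intro w
      rcases Classical.em (w = v) with hwv | hwv
      · have hne : (S.neighborSet v).Nonempty := by
          rcases Set.eq_empty_or_nonempty (S.neighborSet v) with h | h
          · rw [h] at hdeg; simp at hdeg
          · exact h
        obtain ⟨u₀, hu₀⟩ := hne
        exact ⟨⟨u₀, hu₀⟩, ⟨w, Or.inr hwv⟩, rfl⟩
      · obtain ⟨u, huv, hw⟩ := cset_cover hT hwv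
        exact ⟨⟨u, huv⟩, ⟨w, Or.inl hw⟩, rfl⟩
    · intro i a b
      exact (piece_adj hT i.2 a b).symm
    · intro i j a b hij hav hbv hab
      have ha : a.1 ∈ CSet S v i.1 := a.2.resolve_right (fun h => hav (Subtype.ext h))
      have hb : b.1 ∈ CSet S v j.1 := b.2.resolve_right (fun h => hbv (Subtype.ext h))
      have hbi : b.1 ∈ CSet S v i.1 :=
        cset_closed ha hab (fun h => hbv (Subtype.ext h))
      exact hdisj i j hij hbi hb
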